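/- Let X be an integer-valued random variable with characteristic function φ(t) = E[e^{itX}]. Then sup_x P(X = x) ≤ (96/95)² (2/π) ∫_{-π/2}^{π/2} |φ(t)| dt. -/

import Mathlib

/-!
The triangle function `a - |t|` on `[-a, a]` has the nonnegative cosine transform
`k m = 2 (1 - cos (a m)) / m ^ 2`, with `k 0 = a ^ 2`. Integrating `k (y - x)` against the law `ν`
of `X` and exchanging the integrals gives
`a ^ 2 ν {x} ≤ ∫ k (y - x) dν(y) = ∫_{-a}^{a} (a - |t|) Re (e^{-itx} φ(t)) dt ≤ a ∫_{-a}^{a} |φ|`,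
valid for any real random variable. For `a = π / 2` this gives the constant `2 / π`, which is
already below `(96 / 95) ^ 2 * (2 / π)`.
-/

open MeasureTheory Set Complex

theorem integral_sub_mul_cos (a : ℝ) {m : ℝ} (hm : m ≠ 0) :
    ∫ t in 0..a, (a - t) * Real.cos (t * m) = (1 - Real.cos (a * m)) / m ^ 2 := by
  have hderiv : ∀ t ∈ uIcc 0 a,
      HasDerivAt (fun s => (a - s) * Real.sin (s * m) / m - Real.cos (s * m) / m ^ 2)
        ((a - t) * Real.cos (t * m)) t := by
    intro t _
    have hs := (hasDerivAt_mul_const m).sin (x := t)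
    have hc := (hasDerivAt_mul_const m).cos (x := t)
    refine ((((hasDerivAt_id' t).const_sub a).mul hs).div_const m |>.sub
      (hc.div_const (m ^ 2))).congr_deriv ?_
    field_simp
    ring
  rw [intervalIntegral.integral_eq_sub_of_hasDerivAt hderiv
    ((by fun_prop : Continuous _).intervalIntegrable _ _)]
  field_simp
  simp only [sub_self, mul_zero, zero_mul, zero_sub, sub_zero, Real.sin_zero, Real.cos_zero,
    sub_neg_eq_add]
  ring

theorem integral_Ioc_triangle_mul_cos {a : ℝ} (ha : 0 ≤ a) (m : ℝ) :
    ∫ t in Ioc (-a) a, (a - |t|) * Real.cos (t * m) =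
      2 * ∫ t in 0..a, (a - t) * Real.cos (t * m) := by
  have hcont : Continuous fun t => (a - |t|) * Real.cos (t * m) := by fun_prop
  rw [← intervalIntegral.integral_of_le (by linarith),
    ← intervalIntegral.integral_add_adjacent_intervals (b := 0) (hcont.intervalIntegrable _ _)
      (hcont.intervalIntegrable _ _), two_mul]
  congr 1
  · rw [← neg_zero, ← intervalIntegral.integral_comp_neg, neg_zero]
    refine intervalIntegral.integral_congr fun t ht => ?_
    rw [uIcc_of_le ha] at ht
    simp [abs_of_nonneg ht.1]
  · refine intervalIntegral.integral_congr fun t ht => ?_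
    rw [uIcc_of_le ha] at ht
    simp [abs_of_nonneg ht.1]

theorem integral_Ioc_triangle_mul_cos_nonneg {a : ℝ} (ha : 0 ≤ a) (m : ℝ) :
    0 ≤ ∫ t in Ioc (-a) a, (a - |t|) * Real.cos (t * m) := by
  rw [integral_Ioc_triangle_mul_cos ha]
  rcases eq_or_ne m 0 with rfl | hm
  · simp only [mul_zero, Real.cos_zero, mul_one]
    have := intervalIntegral.integral_nonneg (μ := volume) ha fun t ht => sub_nonneg.2 ht.2
    positivity
  · rw [integral_sub_mul_cos a hm]
    have : 0 ≤ 1 - Real.cos (a * m) := sub_nonneg.2 (Real.cos_le_one _)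
    positivity

theorem integral_Ioc_triangle {a : ℝ} (ha : 0 ≤ a) :
    ∫ t in Ioc (-a) a, (a - |t|) = a ^ 2 := by
  have h := integral_Ioc_triangle_mul_cos ha 0
  simp only [mul_zero, Real.cos_zero, mul_one] at h
  rw [h, intervalIntegral.integral_sub intervalIntegrable_const
    intervalIntegral.intervalIntegrable_id, intervalIntegral.integral_const, integral_id]
  simp only [sub_zero, smul_eq_mul, ne_eq, OfNat.ofNat_ne_zero, not_false_eq_true, zero_pow]
  ring

theorem integral_cos_mul_sub_eq_re_charFun (ν : Measure ℝ) [IsFiniteMeasure ν] (t x : ℝ) :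
    ∫ y, Real.cos (t * (y - x)) ∂ν = (cexp (-(t * x) * I) * charFun ν t).re := by
  rw [charFun_apply_real, ← integral_const_mul, ← RCLike.re_to_complex, ← integral_re]
  · congr 1 with y
    rw [RCLike.re_to_complex, ← Complex.exp_add,
      show -(↑t * ↑x) * I + ↑t * ↑y * I = ((t * (y - x) : ℝ) : ℂ) * I by push_cast; ring,
      Complex.exp_ofReal_mul_I_re]
  · refine ((integrable_const (1 : ℝ)).mono' (by fun_prop) (ae_of_all _ fun y => ?_)).const_mul _
    rw [← ofReal_mul, norm_exp_ofReal_mul_I]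

theorem measureReal_singleton_le_integral_norm_charFun (ν : Measure ℝ) [IsFiniteMeasure ν]
    {a : ℝ} (ha : 0 < a) (x : ℝ) :
    ν.real {x} ≤ a⁻¹ * ∫ t in Ioc (-a) a, ‖charFun ν t‖ := by
  set f : ℝ → ℝ → ℝ := fun y t => (a - |t|) * Real.cos (t * (y - x))
  have hf : Integrable (Function.uncurry f) (ν.prod (volume.restrict (Ioc (-a) a))) := by
    have htriangle : IntegrableOn (fun t : ℝ => a - |t|) (Ioc (-a) a) :=
      (by fun_prop : Continuous fun t : ℝ => a - |t|).integrableOn_Ioc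
    refine (htriangle.comp_snd ν).mono (by fun_prop) (ae_of_all _ fun p => ?_)
    rw [Function.uncurry_apply_pair, norm_mul]
    exact mul_le_of_le_one_right (norm_nonneg _) (Real.abs_cos_le_one _)
  have hlower : a ^ 2 * ν.real {x} ≤ ∫ y, (∫ t in Ioc (-a) a, f y t) ∂ν :=
    calc a ^ 2 * ν.real {x} = ∫ y in {x}, (∫ t in Ioc (-a) a, f y t) ∂ν := by
          simp only [integral_singleton, f, sub_self, mul_zero, Real.cos_zero, mul_one,
            integral_Ioc_triangle ha.le, smul_eq_mul, mul_comm]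
      _ ≤ ∫ y, (∫ t in Ioc (-a) a, f y t) ∂ν := setIntegral_le_integral hf.integral_prod_left
          (ae_of_all _ fun y => integral_Ioc_triangle_mul_cos_nonneg ha.le _)
  have hinner : ∀ t ∈ Ioc (-a) a, ∫ y, f y t ∂ν ≤ a * ‖charFun ν t‖ := by
    intro t ht
    have ht' : |t| ≤ a := abs_le.2 ⟨ht.1.le, ht.2⟩
    have hre : (cexp (-(t * x) * I) * charFun ν t).re ≤ ‖charFun ν t‖ := by
      refine (re_le_norm _).trans_eq ?_
      rw [norm_mul, ← ofReal_mul, ← ofReal_neg, norm_exp_ofReal_mul_I, one_mul]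
    rw [integral_const_mul, integral_cos_mul_sub_eq_re_charFun]
    calc (a - |t|) * (cexp (-(t * x) * I) * charFun ν t).re ≤ (a - |t|) * ‖charFun ν t‖ :=
          mul_le_mul_of_nonneg_left hre (sub_nonneg.2 ht')
      _ ≤ a * ‖charFun ν t‖ :=
          mul_le_mul_of_nonneg_right (by linarith [abs_nonneg t]) (norm_nonneg _)
  have hupper : ∫ y, (∫ t in Ioc (-a) a, f y t) ∂ν ≤ a * ∫ t in Ioc (-a) a, ‖charFun ν t‖ := by
    rw [integral_integral_swap hf, ← integral_const_mul]
    exact setIntegral_mono_on hf.integral_prod_right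
      (((intervalIntegrable_iff_integrableOn_Ioc_of_le (by linarith)).1
        intervalIntegrable_charFun).norm.const_mul a) measurableSet_Ioc hinner
  rw [le_inv_mul_iff₀ ha]
  refine le_of_mul_le_mul_left ?_ ha
  calc a * (a * ν.real {x}) = a ^ 2 * ν.real {x} := by ring
    _ ≤ a * ∫ t in Ioc (-a) a, ‖charFun ν t‖ := hlower.trans hupper

theorem charFun_map_intCast {Ω : Type*} [MeasurableSpace Ω] (μ : Measure Ω) {X : Ω → ℤ}
    (hX : Measurable X) (t : ℝ) :
    charFun (μ.map fun ω => (X ω : ℝ)) t = ∫ ω, cexp (I * t * (X ω : ℂ)) ∂μ := by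
  rw [charFun_apply_real, integral_map (by fun_prop) (by fun_prop)]
  congr 1 with ω
  push_cast
  ring_nf

theorem stmt4 {Ω : Type*} [MeasurableSpace Ω] (μ : Measure Ω) [IsProbabilityMeasure μ]
    (X : Ω → ℤ) (hX : Measurable X) (x : ℤ) :
    (μ {ω | X ω = x}).toReal ≤
      (96 / 95 : ℝ) ^ 2 * (2 / Real.pi) *
        ∫ t in Set.Ioc (-(Real.pi / 2)) (Real.pi / 2),
          ‖∫ ω, Complex.exp (Complex.I * t * (X ω : ℂ)) ∂μ‖ := by
  have hXℝ : Measurable fun ω => (X ω : ℝ) := by fun_prop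
  have hbound := measureReal_singleton_le_integral_norm_charFun (μ.map fun ω => (X ω : ℝ))
    (half_pos Real.pi_pos) x
  rw [measureReal_def, Measure.map_apply hXℝ (measurableSet_singleton _), inv_div] at hbound
  simp only [charFun_map_intCast μ hX, preimage, mem_singleton_iff, Int.cast_inj] at hbound
  rw [mul_assoc]
  exact hbound.trans (le_mul_of_one_le_left (by positivity) (by norm_num))
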